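/- arXiv:1109.1761 — 7 statements merged into one kernel-verified Lean document; each statement's English description precedes it below -/
import Mathlib

section
/- Consider a closed tandem (ring) of L ≥ 2 queues indexed by i ∈ ℤ/Lℤ. Each queue has countable single-queue state space E, with functions n : E → ℕ (number of clients) and μ : E → ℝ≥0 (service rate). For each i let p_i^-(z,z') ≥ 0 be departure-routing probabilities supported on pairs with n(z') = n(z) − 1 and satisfying ∑_{z'} p_i^-(z,z') = 1 whenever n(z) ≥ 1; let p_i^+(z,z') ≥ 0 be arrival-routing probabilities supported on pairs with n(z') = n(z) + 1 and satisfying ∑_{z'} p_i^+(z,z') = 1; let q_i^0(z,z') ≥ 0 be internal transition rates supported on pairs with n(z') = n(z); and let π_i : E → ℝ>0 be a strictly positive weight. Fix λ > 0 and assume all displayed infinite sums converge absolutely. If for every i and every z_i ∈ E the partial balance equations hold: (a) ∑_{z : n(z) = n(z_i)+1} μ(z) p_i^-(z, z_i) π_i(z) = λ π_i(z_i), and (b) μ(z_i) π_i(z_i) + ∑_{z : n(z) = n(z_i)} q_i^0(z_i, z) π_i(z_i) = ∑_{z : n(z) = n(z_i)−1} λ p_i^+(z, z_i) π_i(z) +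 ∑_{z : n(z) = n(z_i)} q_i^0(z, z_i) π_i(z), then the product weight satisfies the global balance equation of the tandem dynamics: for every configuration (z_0, …, z_{L−1}) ∈ E^L, ∑_{i} ∑_{z' : n(z')=n(z_i)+1} ∑_{z'' : n(z'')=n(z_{i+1})−1} μ(z') p_i^-(z', z_i) p_{i+1}^+(z'', z_{i+1}) π_i(z') π_{i+1}(z'') ∏_{j ≠ i, i+1} π_j(z_j) + ∑_i ∑_{z : n(z)=n(z_i)} q_i^0(z, z_i) π_i(z) ∏_{j ≠ i} π_j(z_j) = ( ∑_i μ(z_i) + ∑_i ∑_{z : n(z)=n(z_i)} q_i^0(z_i, z) ) ∏_j π_j(z_j), where indices are taken modulo L. -/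
/-!
By partial balance (a), the departures into the current state `z i` of queue `i` have total flow
`lam * π i (z i)`; since the joint sum over (departure state at `i`, arrival origin at `i + 1`)
factorizes, a service at queue `i` contributes `π i (z i)` times the Poisson-arrival inflow of
queue `i + 1`. Shifting the ring index by one, global balance becomes a sum over the queues of
partial balance (b), each multiplied by the weights of the other queues.
-/

open Finset

theorem tsum_mul_tsum_of_summable_prod {𝕜 β γ : Type*} [NormedDivisionRing 𝕜] [CompleteSpace 𝕜]
    {f : β → 𝕜} {g : γ → 𝕜} (h : Summable fun p : β × γ => f p.1 * g p.2) :
    ∑' p : β × γ, f p.1 * g p.2 = (∑' b, f b) * ∑' c, g c := by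
  rw [h.tsum_prod, ← tsum_mul_right]
  simp_rw [tsum_mul_left]

section FiniteRing

variable {ι R : Type*} [Fintype ι] [DecidableEq ι]

theorem mul_prod_erase_erase [CommMonoid R] (x : ι → R) {i k : ι} (h : i ≠ k) :
    x i * ∏ j ∈ (univ.erase i).erase k, x j = ∏ j ∈ univ.erase k, x j := by
  rw [erase_right_comm]
  exact mul_prod_erase _ x (mem_erase.mpr ⟨h, mem_univ i⟩)

theorem sum_mul_mul_prod_erase [CommSemiring R] (a x : ι → R) :
    ∑ i, a i * x i * ∏ j ∈ univ.erase i, x j = (∑ i, a i) * ∏ j, x j := by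
  rw [sum_mul]
  refine sum_congr rfl fun i _ => ?_
  rw [mul_assoc, mul_prod_erase _ x (mem_univ i)]

/-- Sites carry weights `x`, arrival inflow `arr`, internal inflow `qin` and internal outflow rate
`qout`; `T i` is the flow of a jump from `i` to `i + s`. -/
theorem ring_global_balance [AddGroup ι] [CommRing R] {s : ι} (hs : s ≠ 0)
    (x μ arr qin qout T : ι → R) (hT : ∀ i, T i = x i * arr (i + s))
    (hb : ∀ i, μ i * x i + qout i * x i = arr i + qin i) :
    ∑ i, T i * ∏ j ∈ (univ.erase i).erase (i + s), x j + ∑ i, qin i * ∏ j ∈ univ.erase i, x j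
      = (∑ i, μ i + ∑ i, qout i) * ∏ j, x j := by
  have hshift : ∑ i, T i * ∏ j ∈ (univ.erase i).erase (i + s), x j
      = ∑ i, arr i * ∏ j ∈ univ.erase i, x j := by
    calc ∑ i, T i * ∏ j ∈ (univ.erase i).erase (i + s), x j
        = ∑ i, arr (i + s) * ∏ j ∈ univ.erase (i + s), x j := by
          refine sum_congr rfl fun i _ => ?_
          rw [hT, mul_right_comm, mul_prod_erase_erase x (left_ne_add.mpr hs), mul_comm]
      _ = ∑ i, arr i * ∏ j ∈ univ.erase i, x j :=
          Fintype.sum_equiv (Equiv.addRight s) _ _ fun _ => rfl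
  rw [hshift, ← sum_add_distrib, add_mul, ← sum_mul_mul_prod_erase, ← sum_mul_mul_prod_erase,
    ← sum_add_distrib]
  refine sum_congr rfl fun i _ => ?_
  rw [← add_mul, ← hb, add_mul]

end FiniteRing

theorem tsum_service_arrival_eq {E : Type*} (n : E → ℕ) (μ : E → ℝ) (pminus pplus : E → E → ℝ)
    (πi πk : E → ℝ) (lam : ℝ) (zi zk : E)
    (hsum : Summable fun p : E × E =>
      if n p.1 = n zi + 1 ∧ n p.2 + 1 = n zk then
        μ p.1 * pminus p.1 zi * pplus p.2 zk * πi p.1 * πk p.2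
      else 0)
    (hpb : (∑' z, if n z = n zi + 1 then μ z * pminus z zi * πi z else 0) = lam * πi zi) :
    (∑' p : E × E,
      if n p.1 = n zi + 1 ∧ n p.2 + 1 = n zk then
        μ p.1 * pminus p.1 zi * pplus p.2 zk * πi p.1 * πk p.2
      else 0)
      = πi zi * ∑' z, if n z + 1 = n zk then lam * pplus z zk * πk z else 0 := by
  set f : E → ℝ := fun z => if n z = n zi + 1 then μ z * pminus z zi * πi z else 0
  set g : E → ℝ := fun z => if n z + 1 = n zk then pplus z zk * πk z else 0
  have hsplit : ∀ p : E × E,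
      (if n p.1 = n zi + 1 ∧ n p.2 + 1 = n zk then
        μ p.1 * pminus p.1 zi * pplus p.2 zk * πi p.1 * πk p.2 else 0) = f p.1 * g p.2 :=
    fun p => by
      rw [ite_zero_mul_ite_zero]
      congr 1
      ring
  rw [tsum_congr hsplit, tsum_mul_tsum_of_summable_prod ((summable_congr hsplit).mp hsum), hpb,
    mul_comm lam, mul_assoc, ← tsum_mul_left]
  simp_rw [g, mul_ite, mul_zero, mul_assoc]

theorem tandem_partial_balance_implies_global_balance_general
    (L : ℕ) [NeZero L] (hL : 2 ≤ L)
    (E : Type*)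
    (n : E → ℕ) (μ : E → ℝ)
    (pminus pplus : ZMod L → E → E → ℝ)
    (q0 : ZMod L → E → E → ℝ)
    (π : ZMod L → E → ℝ)
    (lam : ℝ)
    -- absolute convergence of all displayed sums
    (hsum_c : ∀ (i : ZMod L) (c : ZMod L → E), Summable (fun p : E × E =>
      if n p.1 = n (c i) + 1 ∧ n p.2 + 1 = n (c (i + 1)) then
        μ p.1 * pminus i p.1 (c i) * pplus (i + 1) p.2 (c (i + 1)) *
          π i p.1 * π (i + 1) p.2
      else 0))
    -- partial balance equation (a)
    (hpb_a : ∀ i zi,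
      (∑' z, if n z = n zi + 1 then μ z * pminus i z zi * π i z else 0)
        = lam * π i zi)
    -- partial balance equation (b)
    (hpb_b : ∀ i zi,
      μ zi * π i zi + (∑' z, if n z = n zi then q0 i zi z * π i zi else 0)
        = (∑' z, if n z + 1 = n zi then lam * pplus i z zi * π i z else 0)
          + ∑' z, if n z = n zi then q0 i z zi * π i z else 0) :
    -- global balance for every configuration of the ring
    ∀ c : ZMod L → E,
      (∑ i : ZMod L,
        (∑' p : E × E,
          if n p.1 = n (c i) + 1 ∧ n p.2 + 1 = n (c (i + 1)) then
            μ p.1 * pminus i p.1 (c i) * pplus (i + 1) p.2 (c (i + 1)) *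
              π i p.1 * π (i + 1) p.2
          else 0) * ∏ j ∈ (Finset.univ.erase i).erase (i + 1), π j (c j))
      + (∑ i : ZMod L,
          (∑' z, if n z = n (c i) then q0 i z (c i) * π i z else 0)
            * ∏ j ∈ Finset.univ.erase i, π j (c j))
      = ((∑ i : ZMod L, μ (c i))
          + ∑ i : ZMod L, ∑' z, if n z = n (c i) then q0 i (c i) z else 0)
        * ∏ j : ZMod L, π j (c j) := by
  intro c
  have hone : (1 : ZMod L) ≠ 0 := by
    have : Fact (1 < L) := ⟨hL⟩
    exact one_ne_zero
  refine ring_global_balance hone (fun i => π i (c i)) (fun i => μ (c i))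
    (fun i => ∑' z, if n z + 1 = n (c i) then lam * pplus i z (c i) * π i z else 0) _ _ _
    (fun i => tsum_service_arrival_eq n μ (pminus i) (pplus (i + 1)) (π i) (π (i + 1)) lam
      (c i) (c (i + 1)) (hsum_c i c) (hpb_a i (c i))) fun i => ?_
  rw [← hpb_b i (c i), ← tsum_mul_right]
  simp_rw [ite_zero_mul]

/-- Product-form stationarity for a closed tandem of queues with stochastic
service rates: partial balance for each queue in isolation implies global
balance of the product weight on the ring. -/
theorem tandem_partial_balance_implies_global_balance
    (L : ℕ) [NeZero L] (hL : 2 ≤ L)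
    (E : Type*) [Countable E]
    (n : E → ℕ) (μ : E → ℝ)
    (pminus pplus : ZMod L → E → E → ℝ)
    (q0 : ZMod L → E → E → ℝ)
    (π : ZMod L → E → ℝ)
    (lam : ℝ) (hlam : 0 < lam)
    (hμ_nonneg : ∀ z, 0 ≤ μ z)
    (hpminus_nonneg : ∀ i z z', 0 ≤ pminus i z z')
    (hpplus_nonneg : ∀ i z z', 0 ≤ pplus i z z')
    (hq0_nonneg : ∀ i z z', 0 ≤ q0 i z z')
    (hπ_pos : ∀ i z, 0 < π i z)
    -- support conditions
    (hpminus_supp : ∀ i z z', pminus i z z' ≠ 0 → n z' + 1 = n z)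
    (hpplus_supp : ∀ i z z', pplus i z z' ≠ 0 → n z' = n z + 1)
    (hq0_supp : ∀ i z z', q0 i z z' ≠ 0 → n z' = n z)
    -- normalization of the routing probabilities
    (hpminus_sum : ∀ i z, 1 ≤ n z → ∑' z', pminus i z z' = 1)
    (hpplus_sum : ∀ i z, ∑' z', pplus i z z' = 1)
    -- absolute convergence of all displayed sums
    (hsum_a : ∀ i zi, Summable (fun z =>
      if n z = n zi + 1 then μ z * pminus i z zi * π i z else 0))
    (hsum_b1 : ∀ i zi, Summable (fun z => if n z = n zi then q0 i zi z else 0))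
    (hsum_b2 : ∀ i zi, Summable (fun z =>
      if n z + 1 = n zi then lam * pplus i z zi * π i z else 0))
    (hsum_b3 : ∀ i zi, Summable (fun z =>
      if n z = n zi then q0 i z zi * π i z else 0))
    (hsum_c : ∀ (i : ZMod L) (c : ZMod L → E), Summable (fun p : E × E =>
      if n p.1 = n (c i) + 1 ∧ n p.2 + 1 = n (c (i + 1)) then
        μ p.1 * pminus i p.1 (c i) * pplus (i + 1) p.2 (c (i + 1)) *
          π i p.1 * π (i + 1) p.2
      else 0))
    -- partial balance equation (a)
    (hpb_a : ∀ i zi,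
      (∑' z, if n z = n zi + 1 then μ z * pminus i z zi * π i z else 0)
        = lam * π i zi)
    -- partial balance equation (b)
    (hpb_b : ∀ i zi,
      μ zi * π i zi + (∑' z, if n z = n zi then q0 i zi z * π i zi else 0)
        = (∑' z, if n z + 1 = n zi then lam * pplus i z zi * π i z else 0)
          + ∑' z, if n z = n zi then q0 i z zi * π i z else 0) :
    -- global balance for every configuration of the ring
    ∀ c : ZMod L → E,
      (∑ i : ZMod L,
        (∑' p : E × E,
          if n p.1 = n (c i) + 1 ∧ n p.2 + 1 = n (c (i + 1)) then
            μ p.1 * pminus i p.1 (c i) * pplus (i + 1) p.2 (c (i + 1)) *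
              π i p.1 * π (i + 1) p.2
          else 0) * ∏ j ∈ (Finset.univ.erase i).erase (i + 1), π j (c j))
      + (∑ i : ZMod L,
          (∑' z, if n z = n (c i) then q0 i z (c i) * π i z else 0)
            * ∏ j ∈ Finset.univ.erase i, π j (c j))
      = ((∑ i : ZMod L, μ (c i))
          + ∑ i : ZMod L, ∑' z, if n z = n (c i) then q0 i (c i) z else 0)
        * ∏ j : ZMod L, π j (c j) :=
  tandem_partial_balance_implies_global_balance_general L hL E n μ pminus pplus q0 π lam hsum_c
    hpb_a hpb_b
end

section
/- Let v_a, v_b, ρ_a, ρ_b be real numbers with v_a > 0, v_b > 0, ρ_a > 0, ρ_b > 0, and let M be the 2×2 real matrix M = [[v_a(1 − 2ρ_a − ρ_b), −v_a ρ_a], [−v_b ρ_b, v_b(1 − ρ_a − 2ρ_b)]]. Then Δ := (v_a(1 − 2ρ_a − ρ_b) − v_b(1 − ρ_a − 2ρ_b))² + 4 v_a v_b ρ_a ρ_b > 0, and M has two distinct real eigenvalues λ^± = (1/2)( v_a + v_b − v_a(2ρ_a + ρ_b) − v_b(ρ_a + 2ρ_b) ± √Δ ). -/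
lemma mem_spectrum_of_det_eq_zero {n : Type*} [Fintype n] [DecidableEq n]
    (M : Matrix n n ℝ) (r : ℝ) (h : (r • (1 : Matrix n n ℝ) - M).det = 0) :
    r ∈ spectrum ℝ M := by
  rw [spectrum.mem_iff, Matrix.isUnit_iff_isUnit_det, isUnit_iff_ne_zero]
  simp only [ne_eq, not_not]
  rw [← h]
  congr 1
  rw [Algebra.algebraMap_eq_smul_one]

/-- Hyperbolicity of the hydrodynamic system of the two-speed exclusion
process: the Jacobian matrix has two distinct real eigenvalues
`λ± = (1/2)(v_a + v_b − v_a(2ρ_a+ρ_b) − v_b(ρ_a+2ρ_b) ± √Δ)`. -/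
theorem two_speed_jacobian_real_eigenvalues
    (va vb ρa ρb : ℝ) (hva : 0 < va) (hvb : 0 < vb)
    (hρa : 0 < ρa) (hρb : 0 < ρb) :
    let M : Matrix (Fin 2) (Fin 2) ℝ :=
      !![va * (1 - 2 * ρa - ρb), -va * ρa;
         -vb * ρb, vb * (1 - ρa - 2 * ρb)]
    let Δ := (va * (1 - 2 * ρa - ρb) - vb * (1 - ρa - 2 * ρb)) ^ 2
        + 4 * va * vb * ρa * ρb
    let lamPlus := (1 / 2) * (va + vb - va * (2 * ρa + ρb)
        - vb * (ρa + 2 * ρb) + Real.sqrt Δ)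
    let lamMinus := (1 / 2) * (va + vb - va * (2 * ρa + ρb)
        - vb * (ρa + 2 * ρb) - Real.sqrt Δ)
    0 < Δ ∧
    lamPlus ∈ spectrum ℝ M ∧
    lamMinus ∈ spectrum ℝ M ∧
    lamPlus ≠ lamMinus := by
  intro M Δ lamPlus lamMinus
  have hΔ : 0 < Δ := by
    show 0 < (va * (1 - 2 * ρa - ρb) - vb * (1 - ρa - 2 * ρb)) ^ 2
        + 4 * va * vb * ρa * ρb
    positivity
  have hsq : Real.sqrt Δ ^ 2 = Δ := Real.sq_sqrt hΔ.le
  have hsqpos : 0 < Real.sqrt Δ := Real.sqrt_pos.mpr hΔ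
  have det_eval : ∀ r : ℝ, (r • (1 : Matrix (Fin 2) (Fin 2) ℝ) - M).det
      = (r - va * (1 - 2 * ρa - ρb)) * (r - vb * (1 - ρa - 2 * ρb))
        - (-va * ρa) * (-vb * ρb) := by
    intro r
    simp [M, Matrix.det_fin_two, Matrix.smul_apply, Matrix.one_apply]
    try ring
  refine ⟨hΔ, ?_, ?_, ?_⟩
  · apply mem_spectrum_of_det_eq_zero
    rw [det_eval]
    simp only [lamPlus, Δ] at hsq ⊢
    nlinarith [hsq]
  · apply mem_spectrum_of_det_eq_zero
    rw [det_eval]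
    simp only [lamMinus, Δ] at hsq ⊢
    nlinarith [hsq]
  · simp only [lamPlus, lamMinus, ne_eq]
    intro h
    have : Real.sqrt Δ = 0 := by linarith [(by linarith : (1:ℝ)/2 * Real.sqrt Δ = -(1/2) * Real.sqrt Δ)]
    linarith
end

section
/- Consider the two-speed queue with parameters λ_a, λ_b ≥ 0, λ := λ_a + λ_b > 0, μ_a, μ_b > 0, γ > 0, δ > 0, and p_n := (λ_a/λ)(λ/(λ+δ))^n, p̄_n := 1 − p_n. Suppose real numbers π_0 and sequences (π_n^a)_{n≥1}, (π_n^b)_{n≥1} form a steady state, i.e.: for all n ≥ 2, λ(π_{n−1}^a − π_n^a) + (μ_a π_{n+1}^a + μ_b π_{n+1}^b) p_n − μ_a π_n^a + γ π_n^b = 0 and λ(π_{n−1}^b − π_n^b) + (μ_a π_{n+1}^a + μ_b π_{n+1}^b) p̄_n − μ_b π_n^b − γ π_n^b = 0; for n = 1, λ_a π_0 − λ π_1^a + (μ_a π_2^a + μ_b π_2^b) p_1 − μ_a π_1^a + γ π_1^b = 0 and λ_b π_0 − λ π_1^b + (μ_a π_2^a + μ_b π_2^b) p̄_1 − μ_b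 π_1^b − γ π_1^b = 0; and λ π_0 = μ_a π_1^a + μ_b π_1^b. Then the partial balance relation λ π_n = μ_a π_{n+1}^a + μ_b π_{n+1}^b holds for every n ≥ 0, where π_n := π_n^a + π_n^b for n ≥ 1 and π_0 is the given value. -/
/-- Partial balance for the two-speed queue: at steady state, the flow
`λ π_n` balances the departure flow `μ_a π_{n+1}^a + μ_b π_{n+1}^b` for
every `n ≥ 0`. -/
theorem two_speed_queue_partial_balance
    (lama lamb lam μa μb γ δ : ℝ)
    (hlama : 0 ≤ lama) (hlamb : 0 ≤ lamb)
    (hlamdef : lam = lama + lamb) (hlam : 0 < lam)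
    (hμa : 0 < μa) (hμb : 0 < μb) (hγ : 0 < γ) (hδ : 0 < δ)
    (p : ℕ → ℝ) (hp : ∀ n, p n = (lama / lam) * (lam / (lam + δ)) ^ n)
    (π0 : ℝ) (πa πb : ℕ → ℝ)
    -- steady state equations for n ≥ 2
    (hssa : ∀ n, 2 ≤ n →
      lam * (πa (n - 1) - πa n) + (μa * πa (n + 1) + μb * πb (n + 1)) * p n
        - μa * πa n + γ * πb n = 0)
    (hssb : ∀ n, 2 ≤ n →
      lam * (πb (n - 1) - πb n)
        + (μa * πa (n + 1) + μb * πb (n + 1)) * (1 - p n)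
        - μb * πb n - γ * πb n = 0)
    -- steady state equations for n = 1
    (hssa1 : lama * π0 - lam * πa 1 + (μa * πa 2 + μb * πb 2) * p 1
        - μa * πa 1 + γ * πb 1 = 0)
    (hssb1 : lamb * π0 - lam * πb 1 + (μa * πa 2 + μb * πb 2) * (1 - p 1)
        - μb * πb 1 - γ * πb 1 = 0)
    -- steady state equation for n = 0
    (hss0 : lam * π0 = μa * πa 1 + μb * πb 1) :
    lam * π0 = μa * πa 1 + μb * πb 1 ∧
    ∀ n, 1 ≤ n → lam * (πa n + πb n) = μa * πa (n + 1) + μb * πb (n + 1) := by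
  refine ⟨hss0, ?_⟩
  intro n hn
  induction n, hn using Nat.le_induction with
  | base =>
    have hsum : (lama * π0 - lam * πa 1 + (μa * πa 2 + μb * πb 2) * p 1
        - μa * πa 1 + γ * πb 1) + (lamb * π0 - lam * πb 1
        + (μa * πa 2 + μb * πb 2) * (1 - p 1) - μb * πb 1 - γ * πb 1) = 0 := by
      rw [hssa1, hssb1]; ring
    have h0 : lam * π0 = lama * π0 + lamb * π0 := by rw [hlamdef]; ring
    ring_nf at hsum h0 ⊢
    linarith [hss0, h0, hsum]
  | succ n hn ih =>
    have ha := hssa (n+1) (by omega)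
    have hb := hssb (n+1) (by omega)
    simp only [Nat.add_sub_cancel] at ha hb
    have hsum : (lam * (πa n - πa (n+1)) + (μa * πa (n+2) + μb * πb (n+2)) * p (n+1)
        - μa * πa (n+1) + γ * πb (n+1)) + (lam * (πb n - πb (n+1))
        + (μa * πa (n+2) + μb * πb (n+2)) * (1 - p (n+1))
        - μb * πb (n+1) - γ * πb (n+1)) = 0 := by
      rw [ha, hb]; ring
    ring_nf at hsum ih ⊢
    nlinarith [ih, hsum]
end

section
/- Consider the two-speed queue with parameters λ_a, λ_b ≥ 0, λ := λ_a + λ_b > 0, μ_a, μ_b > 0, γ > 0, δ > 0, and p_n := (λ_a/λ)(λ/(λ+δ))^n, p̄_n := 1 − p_n. Suppose real numbers π_0 and sequences (π_n^a)_{n≥1}, (π_n^b)_{n≥1} form a steady state, i.e.: for all n ≥ 2, λ(π_{n−1}^a − π_n^a) + (μ_a π_{n+1}^a + μ_b π_{n+1}^b) p_n − μ_a π_n^a + γ π_n^b = 0 and λ(π_{n−1}^b − π_n^b) + (μ_a π_{n+1}^a + μ_b π_{n+1}^b) p̄_n − μ_b π_n^b − γ π_n^b = 0; for n = 1, λ_a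 π_0 − λ π_1^a + (μ_a π_2^a + μ_b π_2^b) p_1 − μ_a π_1^a + γ π_1^b = 0 and λ_b π_0 − λ π_1^b + (μ_a π_2^a + μ_b π_2^b) p̄_1 − μ_b π_1^b − γ π_1^b = 0; and λ π_0 = μ_a π_1^a + μ_b π_1^b. Then for every n ≥ 1, with D_{n+1} := μ_a μ_b + μ_a(γ + λ p_{n+1}) + λ μ_b p̄_{n+1} (> 0), one has π_{n+1}^a = (λ/D_{n+1}) ( (γ + μ_b + λ p_{n+1}) π_n^a + (γ + λ p_{n+1}) π_n^b ) and π_{n+1}^b = (λ/D_{n+1}) ( λ p̄_{n+1} π_n^a + (μ_a + λ p̄_{n+1}) π_n^b ). Moreover, with D_1 := μ_a μ_b + λ p_1 μ_a + λ p̄_1 μ_b + γ μ_a, one has π_1^a = (λ_a μ_b + λ γ + λ² p_1) π_0 / D_1 and π_1^b = (λ_b μ_a + λ² p̄_1) π_0 / D_1. -/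
/-- Explicit inverted recursion for the steady state of the two-speed queue
(Proposition 2 of the paper), together with the initial values `π₁^a, π₁^b`. -/
theorem two_speed_queue_recursion
    (lama lamb lam μa μb γ δ : ℝ)
    (hlama : 0 ≤ lama) (hlamb : 0 ≤ lamb)
    (hlamdef : lam = lama + lamb) (hlam : 0 < lam)
    (hμa : 0 < μa) (hμb : 0 < μb) (hγ : 0 < γ) (hδ : 0 < δ)
    (p : ℕ → ℝ) (hp : ∀ n, p n = (lama / lam) * (lam / (lam + δ)) ^ n)
    (π0 : ℝ) (πa πb : ℕ → ℝ)
    -- steady state equations for n ≥ 2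
    (hssa : ∀ n, 2 ≤ n →
      lam * (πa (n - 1) - πa n) + (μa * πa (n + 1) + μb * πb (n + 1)) * p n
        - μa * πa n + γ * πb n = 0)
    (hssb : ∀ n, 2 ≤ n →
      lam * (πb (n - 1) - πb n)
        + (μa * πa (n + 1) + μb * πb (n + 1)) * (1 - p n)
        - μb * πb n - γ * πb n = 0)
    -- steady state equations for n = 1
    (hssa1 : lama * π0 - lam * πa 1 + (μa * πa 2 + μb * πb 2) * p 1
        - μa * πa 1 + γ * πb 1 = 0)
    (hssb1 : lamb * π0 - lam * πb 1 + (μa * πa 2 + μb * πb 2) * (1 - p 1)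
        - μb * πb 1 - γ * πb 1 = 0)
    -- steady state equation for n = 0
    (hss0 : lam * π0 = μa * πa 1 + μb * πb 1) :
    (∀ n, 1 ≤ n →
      0 < μa * μb + μa * (γ + lam * p (n + 1)) + lam * μb * (1 - p (n + 1)) ∧
      πa (n + 1)
        = lam / (μa * μb + μa * (γ + lam * p (n + 1))
            + lam * μb * (1 - p (n + 1)))
          * ((γ + μb + lam * p (n + 1)) * πa n + (γ + lam * p (n + 1)) * πb n) ∧
      πb (n + 1)
        = lam / (μa * μb + μa * (γ + lam * p (n + 1))
            + lam * μb * (1 - p (n + 1)))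
          * (lam * (1 - p (n + 1)) * πa n
            + (μa + lam * (1 - p (n + 1))) * πb n)) ∧
    πa 1 = (lama * μb + lam * γ + lam ^ 2 * p 1) * π0
        / (μa * μb + lam * p 1 * μa + lam * (1 - p 1) * μb + γ * μa) ∧
    πb 1 = (lamb * μa + lam ^ 2 * (1 - p 1)) * π0
        / (μa * μb + lam * p 1 * μa + lam * (1 - p 1) * μb + γ * μa) := by
  have hlamne : lam ≠ 0 := ne_of_gt hlam
  -- bounds on p
  have hpbd : ∀ n, 0 ≤ p n ∧ p n ≤ 1 := by
    intro n
    rw [hp]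
    have h0 : 0 ≤ lama / lam := div_nonneg hlama hlam.le
    have h0' : 0 ≤ (lam / (lam + δ)) ^ n := by positivity
    refine ⟨mul_nonneg h0 h0', ?_⟩
    have h1 : lama / lam ≤ 1 := by
      rw [div_le_one hlam]; linarith
    have h2 : (lam / (lam + δ)) ^ n ≤ 1 := by
      apply pow_le_one₀ (by positivity)
      rw [div_le_one (by linarith)]; linarith
    calc lama / lam * (lam / (lam + δ)) ^ n ≤ 1 * 1 :=
          mul_le_mul h1 h2 h0' (by norm_num)
      _ = 1 := by norm_num
  -- cut identity
  have hcut : ∀ n, 1 ≤ n →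
      lam * (πa n + πb n) = μa * πa (n + 1) + μb * πb (n + 1) := by
    intro n hn
    induction n with
    | zero => omega
    | succ m ih =>
      by_cases hm : m = 0
      · subst hm
        linear_combination hss0 - hssa1 - hssb1 - π0 * hlamdef
      · have hm1 : 1 ≤ m := by omega
        have ih' := ih hm1
        have ha := hssa (m + 1) (by omega)
        have hb := hssb (m + 1) (by omega)
        simp only [Nat.add_sub_cancel] at ha hb
        linear_combination ih' - ha - hb
  -- positivity of D as a function of q ∈ [0,1]
  have hDpos : ∀ q : ℝ, 0 ≤ q → q ≤ 1 →
      0 < μa * μb + μa * (γ + lam * q) + lam * μb * (1 - q) := by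
    intro q hq0 hq1
    have h1 : 0 ≤ μa * (γ + lam * q) :=
      mul_nonneg hμa.le (by nlinarith)
    have h2 : 0 ≤ lam * μb * (1 - q) :=
      mul_nonneg (mul_nonneg hlam.le hμb.le) (by linarith)
    nlinarith [mul_pos hμa hμb]
  refine ⟨?_, ?_, ?_⟩
  · intro n hn
    obtain ⟨hq0, hq1⟩ := hpbd (n + 1)
    have hD := hDpos (p (n + 1)) hq0 hq1
    have hDne := hD.ne'
    refine ⟨hD, ?_, ?_⟩ <;>
    · have ha := hssa (n + 1) (by omega)
      simp only [Nat.add_sub_cancel] at ha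
      have hcut1 := hcut n hn
      have hcut2 := hcut (n + 1) (by omega)
      have hI : (lam + μa - lam * p (n + 1)) * πa (n + 1)
          - (γ + lam * p (n + 1)) * πb (n + 1) = lam * πa n := by
        linear_combination -ha - p (n + 1) * hcut2
      rw [div_mul_eq_mul_div, eq_div_iff hDne]
      first
      | linear_combination μb * hI - (γ + lam * p (n + 1)) * hcut1
      | linear_combination -μa * hI - (lam + μa - lam * p (n + 1)) * hcut1
  all_goals
    obtain ⟨hq0, hq1⟩ := hpbd 1
    have hD1 : 0 < μa * μb + lam * p 1 * μa + lam * (1 - p 1) * μb + γ * μa := by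
      have := hDpos (p 1) hq0 hq1; nlinarith
    have hcut1 := hcut 1 (by omega)
    have hI : (lam + μa - lam * p 1) * πa 1
        - (γ + lam * p 1) * πb 1 = lama * π0 := by
      linear_combination -hssa1 - p 1 * hcut1
    rw [eq_div_iff hD1.ne']
    first
    | linear_combination μb * hI - (γ + lam * p 1) * hss0
    | linear_combination -μa * hI - (lam + μa - lam * p 1) * hss0
    | linear_combination -μa * hI - (lam + μa - lam * p 1) * hss0 - μa * π0 * hlamdef
    | linear_combination -μa * hI - (lam + μa - lam * p 1) * hss0 + μa * π0 * hlamdef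
end

section
/- Let λ, μ_a, μ_b, γ > 0 and let (p_n)_{n≥1} be a sequence with p_n ∈ [0,1] for all n and p_n → 0 as n → ∞. Suppose (π_n^a)_{n≥1} and (π_n^b)_{n≥1} are strictly positive sequences satisfying, for all n ≥ 1, π_{n+1}^a = (λ/D_{n+1}) ( (γ + μ_b + λ p_{n+1}) π_n^a + (γ + λ p_{n+1}) π_n^b ) and π_{n+1}^b = (λ/D_{n+1}) ( λ (1 − p_{n+1}) π_n^a + (μ_a + λ (1 − p_{n+1})) π_n^b ), where D_{n+1} := μ_a μ_b + μ_a(γ + λ p_{n+1}) + λ μ_b (1 − p_{n+1}). Then the ratio π_n^a/π_n^b converges as n → ∞ to η := (√Δ + γ − λ + μ_b − μ_a)/(2λ), where Δ := (λ − γ + μ_a − μ_b)² + 4λγ; equivalently, η is the unique nonnegative root of λ x² + (μ_a + λ − γ − μ_b) x − γ = 0. -/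
open Filter Topology

/-!
The ratio `r_n = π_n^a / π_n^b` obeys `r_{n+1} = f_{p_{n+1}}(r_n)` for a Möbius map `f_q`.
The fixed points of the limiting map `f_0` are the roots of the quadratic, and at the
nonnegative one `η` one has `f_0 r - η = (γ + μ_b - λη)(r - η) / (λr + μ_a + λ)`, a
contraction on `r ≥ 0` with factor `(γ + μ_b - λη)/(μ_a + λ) < 1`. Since `|f_q r - f_0 r| = O(q)`
uniformly in `r ≥ 0`, the errors `|r_n - η|` satisfy `e_{n+1} ≤ k e_n + O(p_{n+1})` and tend to `0`.
-/

theorem tendsto_zero_of_le_mul_add {e c : ℕ → ℝ} {k : ℝ} (hk0 : 0 ≤ k) (hk1 : k < 1)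
    (he : ∀ n, 0 ≤ e n) (hc : Tendsto c atTop (𝓝 0))
    (hrec : ∀ᶠ n in atTop, e (n + 1) ≤ k * e n + c n) : Tendsto e atTop (𝓝 0) := by
  refine tendsto_order.2 ⟨fun a ha => .of_forall fun n => ha.trans_le (he n), fun ε hε => ?_⟩
  have hδ : 0 < (1 - k) * (ε / 2) := by nlinarith
  obtain ⟨N, hN⟩ := eventually_atTop.1 (hrec.and (hc.eventually (gt_mem_nhds hδ)))
  -- Above `N` the excess of `e` over `ε / 2` contracts by the factor `k` at each step.
  have bound : ∀ m, e (N + m) ≤ k ^ m * e N + ε / 2 := by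
    intro m
    induction m with
    | zero => simp only [add_zero, pow_zero, one_mul]; linarith
    | succ m ih =>
      obtain ⟨hstep, hcm⟩ := hN (N + m) (Nat.le_add_right N m)
      calc e (N + (m + 1)) ≤ k * e (N + m) + c (N + m) := hstep
        _ ≤ k * (k ^ m * e N + ε / 2) + (1 - k) * (ε / 2) := by gcongr
        _ = k ^ (m + 1) * e N + ε / 2 := by ring
  have hpow : Tendsto (fun m => k ^ m * e N) atTop (𝓝 0) := by
    simpa using (tendsto_pow_atTop_nhds_zero_of_lt_one hk0 hk1).mul_const (e N)
  obtain ⟨M, hM⟩ := eventually_atTop.1 (hpow.eventually (gt_mem_nhds (half_pos hε)))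
  refine eventually_atTop.2 ⟨N + M, fun n hn => ?_⟩
  obtain ⟨m, rfl⟩ := Nat.exists_eq_add_of_le (le_trans (Nat.le_add_right N M) hn)
  linarith [bound m, hM m (by omega)]

theorem quadratic_nonneg_root {a b c x : ℝ} (ha : 0 < a) (hc : 0 < c)
    (hx : x = (√(b ^ 2 + 4 * a * c) - b) / (2 * a)) :
    0 ≤ x ∧ a * x ^ 2 + b * x - c = 0 ∧
      ∀ y, 0 ≤ y → a * y ^ 2 + b * y - c = 0 → y = x := by
  set s := √(b ^ 2 + 4 * a * c) with hs
  have hs_sq : s * s = b ^ 2 + 4 * a * c := Real.mul_self_sqrt (by positivity)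
  have hb_lt : |b| < s := by
    rw [hs, Real.lt_sqrt (abs_nonneg b), sq_abs]; nlinarith
  have hdiscrim : discrim a b (-c) = s * s := by rw [discrim, hs_sq]; ring
  have hroots (y : ℝ) : a * y ^ 2 + b * y - c = 0 ↔ y = x ∨ y = (-b - s) / (2 * a) := by
    rw [hx, show s - b = -b + s by ring, ← quadratic_eq_zero_iff ha.ne' hdiscrim y]; ring_nf
  have hx0 : 0 ≤ x := hx ▸ div_nonneg (by linarith [le_abs_self b]) (by positivity)
  refine ⟨hx0, (hroots x).2 (.inl rfl), fun y hy hyroot => ?_⟩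
  refine ((hroots y).1 hyroot).resolve_right fun hy' => ?_
  rw [hy'] at hy
  exact hy.not_gt (div_neg_of_neg_of_pos (by linarith [neg_abs_le b]) (by positivity))

theorem div_eq_of_eq_mul_linear {K : Type*} [Field K] {a b a' b' c A B C D : K}
    (hb : b ≠ 0) (hc : c ≠ 0) (ha' : a' = c * (A * a + B * b)) (hb' : b' = c * (C * a + D * b)) :
    a' / b' = (A * (a / b) + B) / (C * (a / b) + D) := by
  rw [ha', hb', mul_div_mul_left _ _ hc, ← mul_div_mul_right (A * (a / b) + B) _ hb]
  congr 1 <;> field_simp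

namespace TwoSpeedQueue

/-- The ratio `π_{n+1}^a / π_{n+1}^b` as a function of `r = π_n^a / π_n^b`, when `p_{n+1} = q`. -/
noncomputable def ratioMap (lam μa μb γ q r : ℝ) : ℝ :=
  ((γ + μb + lam * q) * r + (γ + lam * q)) / (lam * (1 - q) * r + (μa + lam * (1 - q)))

variable {lam μa μb γ η q r : ℝ}

theorem contraction_factor_bounds (hμa : 0 < μa) (hμb : 0 < μb) (hγ : 0 < γ)
    (hη0 : 0 ≤ η) (hroot : lam * η ^ 2 + (μa + lam - γ - μb) * η - γ = 0) :
    0 ≤ γ + μb - lam * η ∧ γ + μb - lam * η < μa + lam := by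
  have hfactor : η * (lam * η + (μa + lam - γ - μb)) = γ := by linear_combination hroot
  constructor
  · by_contra! h
    nlinarith [mul_pos hμa hμb, mul_pos hμa hγ]
  · by_contra! h
    nlinarith [mul_nonneg hη0 (sub_nonneg.2 h)]

theorem ratioMap_zero_sub (hroot : lam * η ^ 2 + (μa + lam - γ - μb) * η - γ = 0)
    (hden : lam * r + (μa + lam) ≠ 0) :
    ratioMap lam μa μb γ 0 r - η = (γ + μb - lam * η) * (r - η) / (lam * r + (μa + lam)) := by
  simp only [ratioMap, mul_zero, add_zero, sub_zero, mul_one]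
  rw [eq_div_iff hden, sub_mul, div_mul_cancel₀ _ hden]
  linear_combination -hroot

theorem abs_ratioMap_sub_ratioMap_zero_le (hlam : 0 < lam) (hμa : 0 < μa) (hμb : 0 < μb)
    (hγ : 0 < γ) (hq0 : 0 ≤ q) (hq : q ≤ 1 / 2) (hr : 0 ≤ r) :
    |ratioMap lam μa μb γ q r - ratioMap lam μa μb γ 0 r|
      ≤ 2 * (2 * lam + μa + μb + 2 * γ) / lam * q := by
  set N₀ := (γ + μb) * r + γ
  set D₀ := lam * r + (μa + lam)
  set u := lam * q * (r + 1)
  have hu : u ≤ lam * (r + 1) / 2 := by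
    nlinarith [mul_le_mul_of_nonneg_left hq (by positivity : 0 ≤ lam * (r + 1))]
  have hD₀ : lam * (r + 1) ≤ D₀ := by linarith
  have hDq : lam * (r + 1) / 2 ≤ D₀ - u := by linarith
  have hD₀pos : 0 < D₀ := by positivity
  have hDqpos : 0 < D₀ - u := by linarith [mul_pos hlam (by linarith : (0 : ℝ) < r + 1)]
  have hsum : D₀ + N₀ ≤ (2 * lam + μa + μb + 2 * γ) * (r + 1) := by
    simp only [D₀, N₀]; nlinarith
  -- Raising `q` moves the mass `u` from the denominator to the numerator.
  have hdiff : ratioMap lam μa μb γ q r - ratioMap lam μa μb γ 0 r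
      = u * (D₀ + N₀) / ((D₀ - u) * D₀) := by
    have hq : ratioMap lam μa μb γ q r = (N₀ + u) / (D₀ - u) := by
      unfold ratioMap; congr 1 <;> ring
    have h0 : ratioMap lam μa μb γ 0 r = N₀ / D₀ := by
      simp only [ratioMap, mul_zero, add_zero, sub_zero, mul_one, N₀, D₀]
    rw [hq, h0, div_sub_div _ _ hDqpos.ne' hD₀pos.ne']
    congr 1
    ring
  calc |ratioMap lam μa μb γ q r - ratioMap lam μa μb γ 0 r|
      = u * (D₀ + N₀) / ((D₀ - u) * D₀) := by rw [hdiff, abs_of_nonneg (by positivity)]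
    _ ≤ u * ((2 * lam + μa + μb + 2 * γ) * (r + 1)) / (lam * (r + 1) / 2 * (lam * (r + 1))) := by
      gcongr
    _ = 2 * (2 * lam + μa + μb + 2 * γ) / lam * q := by
      field_simp
      ring

theorem abs_ratioMap_sub_le (hlam : 0 < lam) (hμa : 0 < μa) (hμb : 0 < μb) (hγ : 0 < γ)
    (hη0 : 0 ≤ η) (hroot : lam * η ^ 2 + (μa + lam - γ - μb) * η - γ = 0)
    (hq0 : 0 ≤ q) (hq : q ≤ 1 / 2) (hr : 0 ≤ r) :
    |ratioMap lam μa μb γ q r - η|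
      ≤ (γ + μb - lam * η) / (μa + lam) * |r - η| + 2 * (2 * lam + μa + μb + 2 * γ) / lam * q := by
  have hD₀ : 0 < lam * r + (μa + lam) := by positivity
  have hk0 := (contraction_factor_bounds hμa hμb hγ hη0 hroot).1
  have hcontract : |ratioMap lam μa μb γ 0 r - η| ≤ (γ + μb - lam * η) / (μa + lam) * |r - η| := by
    rw [ratioMap_zero_sub hroot hD₀.ne', abs_div, abs_mul, abs_of_nonneg hk0, abs_of_pos hD₀,
      div_mul_eq_mul_div]
    exact div_le_div_of_nonneg_left (by positivity) (by positivity)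
      (by linarith [mul_nonneg hlam.le hr])
  calc |ratioMap lam μa μb γ q r - η|
      ≤ |ratioMap lam μa μb γ q r - ratioMap lam μa μb γ 0 r| + |ratioMap lam μa μb γ 0 r - η| :=
        abs_sub_le _ _ _
    _ ≤ _ := (add_le_add (abs_ratioMap_sub_ratioMap_zero_le hlam hμa hμb hγ hq0 hq hr)
        hcontract).trans_eq (add_comm _ _)

theorem tendsto_of_eventually_eq_ratioMap (hlam : 0 < lam) (hμa : 0 < μa) (hμb : 0 < μb)
    (hγ : 0 < γ) (hη0 : 0 ≤ η) (hroot : lam * η ^ 2 + (μa + lam - γ - μb) * η - γ = 0)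
    {q r : ℕ → ℝ} (hq : Tendsto q atTop (𝓝 0)) (hq0 : ∀ᶠ n in atTop, 0 ≤ q n)
    (hr0 : ∀ᶠ n in atTop, 0 ≤ r n)
    (hr : ∀ᶠ n in atTop, r (n + 1) = ratioMap lam μa μb γ (q n) (r n)) :
    Tendsto r atTop (𝓝 η) := by
  obtain ⟨hk0, hk1⟩ := contraction_factor_bounds hμa hμb hγ hη0 hroot
  rw [tendsto_iff_norm_sub_tendsto_zero]
  refine tendsto_zero_of_le_mul_add (by positivity) ((div_lt_one (by positivity)).2 hk1)
    (fun n => norm_nonneg _) (by simpa using hq.const_mul (2 * (2 * lam + μa + μb + 2 * γ) / lam)) ?_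
  filter_upwards [hq0, hq.eventually (ge_mem_nhds one_half_pos), hr0, hr] with n hqn0 hqn hrn0 hrn
  simp only [Real.norm_eq_abs, hrn]
  exact abs_ratioMap_sub_le hlam hμa hμb hγ hη0 hroot hqn0 hqn hrn0

end TwoSpeedQueue

/-- Asymptotics of the ratio `π_n^a/π_n^b` for the two-speed queue recursion:
the ratio converges to `η = (√Δ + γ − λ + μ_b − μ_a)/(2λ)`, the unique
nonnegative root of `λ x² + (μ_a + λ − γ − μ_b) x − γ = 0`. -/
theorem two_speed_queue_ratio_limit
    (lam μa μb γ : ℝ)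
    (hlam : 0 < lam) (hμa : 0 < μa) (hμb : 0 < μb) (hγ : 0 < γ)
    (p : ℕ → ℝ) (hp01 : ∀ n, 1 ≤ n → 0 ≤ p n ∧ p n ≤ 1)
    (hp0 : Filter.Tendsto p Filter.atTop (nhds 0))
    (πa πb : ℕ → ℝ)
    (hπa_pos : ∀ n, 1 ≤ n → 0 < πa n) (hπb_pos : ∀ n, 1 ≤ n → 0 < πb n)
    (hreca : ∀ n, 1 ≤ n →
      πa (n + 1)
        = lam / (μa * μb + μa * (γ + lam * p (n + 1))
            + lam * μb * (1 - p (n + 1)))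
          * ((γ + μb + lam * p (n + 1)) * πa n + (γ + lam * p (n + 1)) * πb n))
    (hrecb : ∀ n, 1 ≤ n →
      πb (n + 1)
        = lam / (μa * μb + μa * (γ + lam * p (n + 1))
            + lam * μb * (1 - p (n + 1)))
          * (lam * (1 - p (n + 1)) * πa n
            + (μa + lam * (1 - p (n + 1))) * πb n)) :
    let Δ := (lam - γ + μa - μb) ^ 2 + 4 * lam * γ
    let η := (Real.sqrt Δ + γ - lam + μb - μa) / (2 * lam)
    Filter.Tendsto (fun n => πa n / πb n) Filter.atTop (nhds η) ∧
    0 ≤ η ∧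
    lam * η ^ 2 + (μa + lam - γ - μb) * η - γ = 0 ∧
    (∀ x : ℝ, 0 ≤ x → lam * x ^ 2 + (μa + lam - γ - μb) * x - γ = 0 →
      x = η) := by
  intro Δ η
  obtain ⟨hη0, hroot, huniq⟩ := quadratic_nonneg_root (b := μa + lam - γ - μb) (x := η)
    hlam hγ (by simp only [η, Δ]; ring_nf)
  have hD : ∀ n, 0 < μa * μb + μa * (γ + lam * p (n + 1)) + lam * μb * (1 - p (n + 1)) := by
    intro n
    obtain ⟨hp_nonneg, hp_le_one⟩ := hp01 (n + 1) (Nat.le_add_left 1 n)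
    have : 0 ≤ 1 - p (n + 1) := sub_nonneg.2 hp_le_one
    positivity
  refine ⟨TwoSpeedQueue.tendsto_of_eventually_eq_ratioMap hlam hμa hμb hγ hη0 hroot
    (hp0.comp (tendsto_add_atTop_nat 1)) ?_ ?_ ?_, hη0, hroot, huniq⟩
  · exact .of_forall fun n => (hp01 (n + 1) (Nat.le_add_left 1 n)).1
  · exact eventually_atTop.2 ⟨1, fun n hn => (div_pos (hπa_pos n hn) (hπb_pos n hn)).le⟩
  · exact eventually_atTop.2 ⟨1, fun n hn => div_eq_of_eq_mul_linear (hπb_pos n hn).ne'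
      (div_ne_zero hlam.ne' (hD n).ne') (hreca n hn) (hrecb n hn)⟩
end

section
/- Consider the two-speed queue with parameters λ_a, λ_b ≥ 0, λ := λ_a + λ_b > 0, μ_a, μ_b > 0, γ > 0, δ > 0, and p_n := (λ_a/λ)(λ/(λ+δ))^n, p̄_n := 1 − p_n, and set r := λ/(λ+δ). Suppose real numbers π_0 and sequences (π_n^a)_{n≥1}, (π_n^b)_{n≥1} form a steady state, i.e.: for all n ≥ 2, λ(π_{n−1}^a − π_n^a) + (μ_a π_{n+1}^a + μ_b π_{n+1}^b) p_n − μ_a π_n^a + γ π_n^b = 0 and λ(π_{n−1}^b − π_n^b) + (μ_a π_{n+1}^a + μ_b π_{n+1}^b) p̄_n − μ_b π_n^b − γ π_n^b = 0; for n = 1, λ_a π_0 − λ π_1^a + (μ_a π_2^a + μ_b π_2^b) p_1 − μ_a π_1^a + γ π_1^b = 0 and λ_b π_0 − λ π_1^b + (μ_a π_2^a + μ_b π_2^b) p̄_1 − μ_b π_1^b − γ π_1^b = 0; and λ π_0 = μ_a π_1^a + μ_b π_1^b. Define the formal power series g := π_0 + ∑_{n≥1} (π_n^a + π_n^b) X^n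 ∈ ℝ⟦X⟧ and the constants u := λ_a(μ_a − μ_b)/λ², v := (λ_a μ_a + λ_b μ_b) π_0 / λ², w := (μ_a μ_b + λ_a μ_a + λ_b μ_b + γ μ_a) π_0 / λ², Δ := (λ − γ + μ_a − μ_b)² + 4λγ, and z^± := (μ_a + μ_b + λ + γ ± √Δ)/(2λ). Then the functional equation u · g(rX) = −(X − z^+)(X − z^−) · g(X) − v X + w holds as an identity of formal power series, where g(rX) denotes the rescaled series ∑_n g_n r^n X^n. -/
/-!
Adding the two balance equations at level `n` and telescoping gives the cut equations
`μa πa(n+1) + μb πb(n+1) = λ gₙ`: the flow of services out of level `n + 1` equals the flow of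
arrivals into it. Hence the service term `pₙ (μa πa(n+1) + μb πb(n+1))` of the fast-front
equation is `λa rⁿ gₙ`, and eliminating `πa` through `(μa - μb) πaₙ = λ gₙ₋₁ - μb gₙ` (a cut
equation again) leaves the three-term recurrence
`(μa - μb) λa rⁿ gₙ = λ (μa + μb + λ + γ) gₙ₋₁ - (μa μb + γ μa + λ μb) gₙ - λ² gₙ₋₂` for
`n ≥ 2`, with the levels `0` and `1` producing the constants `w` and `v`. This is the
functional equation read coefficientwise; `z±` are the roots of
`λ² z² - λ (μa + μb + λ + γ) z + (μa μb + γ μa + λ μb)`.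
-/

open PowerSeries

theorem PowerSeries.C_mul_rescale_mk_eq_of_recurrence {R : Type*} [CommRing R]
    (f : ℕ → R) (u r z₁ z₂ v w : R)
    (h0 : u * f 0 = w - z₁ * z₂ * f 0)
    (h1 : u * r * f 1 = (z₁ + z₂) * f 0 - z₁ * z₂ * f 1 - v)
    (h2 : ∀ n, u * r ^ (n + 2) * f (n + 2)
      = (z₁ + z₂) * f (n + 1) - z₁ * z₂ * f (n + 2) - f n) :
    C u * rescale r (mk f) = -((X - C z₁) * (X - C z₂)) * mk f - C v * X + C w := by
  have hquad : (X - C z₁) * (X - C z₂) = X ^ 2 - C (z₁ + z₂) * X + C (z₁ * z₂) := by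
    simp only [map_add, map_mul]; ring
  rw [hquad]
  ext n
  rcases n with _ | _ | n
  · simp only [coeff_C_mul, coeff_rescale, pow_zero, coeff_mk, one_mul, map_add, map_mul,
      neg_add_rev, neg_sub, coeff_zero_eq_constantCoeff, map_sub, map_neg, constantCoeff_C,
      constantCoeff_X, mul_zero, map_pow, ne_eq, OfNat.ofNat_ne_zero, not_false_eq_true, zero_pow,
      sub_self, add_zero, constantCoeff_mk, neg_mul, sub_zero]
    linear_combination h0
  · simp only [zero_add, coeff_C_mul, coeff_rescale, pow_one, coeff_mk, map_add, add_mul, map_mul,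
      neg_add_rev, neg_sub, neg_mul, mul_assoc, sub_mul, map_sub, map_neg, coeff_succ_X_mul,
      coeff_X_pow_mul', Nat.not_ofNat_le_one, ↓reduceIte, sub_zero, coeff_succ_mul_X, coeff_zero_C,
      coeff_succ_C, add_zero]
    linear_combination h1
  · simp only [coeff_C_mul, coeff_rescale, coeff_mk, map_add, add_mul, map_mul, neg_add_rev,
      neg_sub, neg_mul, mul_assoc, sub_mul, map_sub, map_neg, coeff_succ_X_mul, coeff_X_pow_mul',
      le_add_iff_nonneg_left, zero_le, ↓reduceIte, Nat.reduceSubDiff, coeff_succ_mul_X,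
      coeff_succ_C, sub_zero, add_zero]
    linear_combination h2 n

theorem quadratic_roots_add_and_mul {a b Δ : ℝ} (ha : a ≠ 0) (hΔ : 0 ≤ Δ) :
    (b + √Δ) / (2 * a) + (b - √Δ) / (2 * a) = b / a ∧
      (b + √Δ) / (2 * a) * ((b - √Δ) / (2 * a)) = (b ^ 2 - Δ) / (4 * a ^ 2) := by
  constructor
  · field_simp; ring
  · rw [div_mul_div_comm, ← sq_sub_sq, Real.sq_sqrt hΔ]; ring

section TwoSpeedQueue

variable {lama lamb lam μa μb γ r π0 : ℝ} {p πa πb : ℕ → ℝ}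

def queueLengthProb (π0 : ℝ) (πa πb : ℕ → ℝ) (n : ℕ) : ℝ :=
  if n = 0 then π0 else πa n + πb n

theorem queueLengthProb_succ (π0 : ℝ) (πa πb : ℕ → ℝ) (n : ℕ) :
    queueLengthProb π0 πa πb (n + 1) = πa (n + 1) + πb (n + 1) :=
  if_neg n.succ_ne_zero

theorem service_rate_succ_eq (hlamdef : lam = lama + lamb)
    (hss0 : lam * π0 = μa * πa 1 + μb * πb 1)
    (hssa1 : lama * π0 - lam * πa 1 + (μa * πa 2 + μb * πb 2) * p 1
        - μa * πa 1 + γ * πb 1 = 0)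
    (hssb1 : lamb * π0 - lam * πb 1 + (μa * πa 2 + μb * πb 2) * (1 - p 1)
        - μb * πb 1 - γ * πb 1 = 0)
    (hssa : ∀ n, 2 ≤ n →
      lam * (πa (n - 1) - πa n) + (μa * πa (n + 1) + μb * πb (n + 1)) * p n
        - μa * πa n + γ * πb n = 0)
    (hssb : ∀ n, 2 ≤ n →
      lam * (πb (n - 1) - πb n)
        + (μa * πa (n + 1) + μb * πb (n + 1)) * (1 - p n)
        - μb * πb n - γ * πb n = 0) (n : ℕ) :
    μa * πa (n + 1) + μb * πb (n + 1) = lam * queueLengthProb π0 πa πb n := by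
  induction n with
  | zero => simpa [queueLengthProb] using hss0.symm
  | succ n ih =>
    rw [queueLengthProb_succ]
    rcases n with _ | n
    · linear_combination hssa1 + hssb1 - hss0 + π0 * hlamdef
    · have ha := hssa (n + 2) (by omega)
      have hb := hssb (n + 2) (by omega)
      simp only [Nat.reduceSubDiff] at ha hb
      rw [queueLengthProb_succ] at ih
      linear_combination ha + hb + ih

theorem queueLengthProb_recurrence_one (hlam : lam ≠ 0) (hlamdef : lam = lama + lamb)
    (hp : ∀ n, lam * p n = lama * r ^ n)
    (hflow : ∀ n, μa * πa (n + 1) + μb * πb (n + 1) = lam * queueLengthProb π0 πa πb n)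
    (hssa1 : lama * π0 - lam * πa 1 + (μa * πa 2 + μb * πb 2) * p 1
        - μa * πa 1 + γ * πb 1 = 0) :
    (μa - μb) * lama * r * queueLengthProb π0 πa πb 1
      = lam * (μa + μb + lam + γ) * π0
        - (μa * μb + γ * μa + lam * μb) * queueLengthProb π0 πa πb 1
        - (lama * μa + lamb * μb) * π0 := by
  have hflow0 := hflow 0
  have hflow1 := hflow 1
  simp only [queueLengthProb, zero_add, one_ne_zero, if_true, if_false] at hflow0 hflow1 ⊢
  have hfast : lam * (lama * π0 - lam * πa 1 + lama * r * (πa 1 + πb 1)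
      - μa * πa 1 + γ * πb 1) = 0 := by
    linear_combination lam * hssa1 - lama * r * hflow1 - (μa * πa 2 + μb * πb 2) * hp 1
  linear_combination (μa - μb) * (mul_eq_zero.mp hfast).resolve_left hlam
    + (lam + μa + γ) * hflow0 - μb * π0 * hlamdef

theorem queueLengthProb_recurrence (hlam : lam ≠ 0) (hp : ∀ n, lam * p n = lama * r ^ n)
    (hflow : ∀ n, μa * πa (n + 1) + μb * πb (n + 1) = lam * queueLengthProb π0 πa πb n)
    (hssa : ∀ n, 2 ≤ n →
      lam * (πa (n - 1) - πa n) + (μa * πa (n + 1) + μb * πb (n + 1)) * p n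
        - μa * πa n + γ * πb n = 0) (n : ℕ) :
    (μa - μb) * lama * r ^ (n + 2) * queueLengthProb π0 πa πb (n + 2)
      = lam * (μa + μb + lam + γ) * queueLengthProb π0 πa πb (n + 1)
        - (μa * μb + γ * μa + lam * μb) * queueLengthProb π0 πa πb (n + 2)
        - lam ^ 2 * queueLengthProb π0 πa πb n := by
  have ha := hssa (n + 2) (by omega)
  simp only [Nat.reduceSubDiff] at ha
  have hflow1 := hflow (n + 1)
  have hflow2 := hflow (n + 2)
  simp only [queueLengthProb_succ] at hflow1 hflow2 ⊢
  have hfast : lam * (lam * (πa (n + 1) - πa (n + 2))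
      + lama * r ^ (n + 2) * (πa (n + 2) + πb (n + 2)) - μa * πa (n + 2) + γ * πb (n + 2)) = 0 := by
    linear_combination lam * ha - lama * r ^ (n + 2) * hflow2
      - (μa * πa (n + 3) + μb * πb (n + 3)) * hp (n + 2)
  linear_combination (μa - μb) * (mul_eq_zero.mp hfast).resolve_left hlam
    + (lam + μa + γ) * hflow1 - lam * hflow n

end TwoSpeedQueue

theorem two_speed_queue_generating_function_equation_general
    (lama lamb lam μa μb γ δ : ℝ)
    (hlamdef : lam = lama + lamb) (hlam : 0 < lam)
    (hγ : 0 < γ)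
    (p : ℕ → ℝ) (hp : ∀ n, p n = (lama / lam) * (lam / (lam + δ)) ^ n)
    (π0 : ℝ) (πa πb : ℕ → ℝ)
    -- steady state equations for n ≥ 2
    (hssa : ∀ n, 2 ≤ n →
      lam * (πa (n - 1) - πa n) + (μa * πa (n + 1) + μb * πb (n + 1)) * p n
        - μa * πa n + γ * πb n = 0)
    (hssb : ∀ n, 2 ≤ n →
      lam * (πb (n - 1) - πb n)
        + (μa * πa (n + 1) + μb * πb (n + 1)) * (1 - p n)
        - μb * πb n - γ * πb n = 0)
    -- steady state equations for n = 1
    (hssa1 : lama * π0 - lam * πa 1 + (μa * πa 2 + μb * πb 2) * p 1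
        - μa * πa 1 + γ * πb 1 = 0)
    (hssb1 : lamb * π0 - lam * πb 1 + (μa * πa 2 + μb * πb 2) * (1 - p 1)
        - μb * πb 1 - γ * πb 1 = 0)
    -- steady state equation for n = 0
    (hss0 : lam * π0 = μa * πa 1 + μb * πb 1) :
    let r := lam / (lam + δ)
    let g : PowerSeries ℝ :=
      PowerSeries.mk fun n => if n = 0 then π0 else πa n + πb n
    let u := lama * (μa - μb) / lam ^ 2
    let v := (lama * μa + lamb * μb) * π0 / lam ^ 2
    let w := (μa * μb + lama * μa + lamb * μb + γ * μa) * π0 / lam ^ 2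
    let Δ := (lam - γ + μa - μb) ^ 2 + 4 * lam * γ
    let zp := (μa + μb + lam + γ + Real.sqrt Δ) / (2 * lam)
    let zm := (μa + μb + lam + γ - Real.sqrt Δ) / (2 * lam)
    PowerSeries.C u * PowerSeries.rescale r g
      = -((PowerSeries.X - PowerSeries.C zp)
            * (PowerSeries.X - PowerSeries.C zm)) * g
        - PowerSeries.C v * PowerSeries.X + PowerSeries.C w := by
  intro r g u v w Δ zp zm
  have hlam₀ : lam ≠ 0 := hlam.ne'
  obtain ⟨hsum, hprod⟩ : zp + zm = (μa + μb + lam + γ) / lam ∧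
      zp * zm = ((μa + μb + lam + γ) ^ 2 - Δ) / (4 * lam ^ 2) :=
    quadratic_roots_add_and_mul hlam₀ (by positivity)
  have hp' : ∀ n, lam * p n = lama * r ^ n := fun n => by
    rw [hp, ← mul_assoc, mul_div_cancel₀ _ hlam₀]
  have hflow := service_rate_succ_eq hlamdef hss0 hssa1 hssb1 hssa hssb
  clear_value r
  refine C_mul_rescale_mk_eq_of_recurrence (queueLengthProb π0 πa πb) _ _ _ _ _ _ ?_ ?_ ?_
  · simp only [queueLengthProb, if_true, hprod, u, w, Δ]
    linear_combination (norm := skip) μb * π0 * hlamdef / lam ^ 2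
    field_simp
    ring
  · rw [hsum, hprod]
    simp only [u, v, Δ]
    linear_combination (norm := skip)
      queueLengthProb_recurrence_one hlam₀ hlamdef hp' hflow hssa1 / lam ^ 2
    simp only [queueLengthProb, if_true]
    field_simp
    ring
  · intro n
    rw [hsum, hprod]
    simp only [u, Δ]
    linear_combination (norm := skip) queueLengthProb_recurrence hlam₀ hp' hflow hssa n / lam ^ 2
    field_simp
    ring

/-- Functional equation for the generating function of the stationary
queue-length distribution of the two-speed queue:
`u g(rX) = −(X − z⁺)(X − z⁻) g(X) − vX + w` as formal power series. -/
theorem two_speed_queue_generating_function_equation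
    (lama lamb lam μa μb γ δ : ℝ)
    (hlama : 0 ≤ lama) (hlamb : 0 ≤ lamb)
    (hlamdef : lam = lama + lamb) (hlam : 0 < lam)
    (hμa : 0 < μa) (hμb : 0 < μb) (hγ : 0 < γ) (hδ : 0 < δ)
    (p : ℕ → ℝ) (hp : ∀ n, p n = (lama / lam) * (lam / (lam + δ)) ^ n)
    (π0 : ℝ) (πa πb : ℕ → ℝ)
    -- steady state equations for n ≥ 2
    (hssa : ∀ n, 2 ≤ n →
      lam * (πa (n - 1) - πa n) + (μa * πa (n + 1) + μb * πb (n + 1)) * p n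
        - μa * πa n + γ * πb n = 0)
    (hssb : ∀ n, 2 ≤ n →
      lam * (πb (n - 1) - πb n)
        + (μa * πa (n + 1) + μb * πb (n + 1)) * (1 - p n)
        - μb * πb n - γ * πb n = 0)
    -- steady state equations for n = 1
    (hssa1 : lama * π0 - lam * πa 1 + (μa * πa 2 + μb * πb 2) * p 1
        - μa * πa 1 + γ * πb 1 = 0)
    (hssb1 : lamb * π0 - lam * πb 1 + (μa * πa 2 + μb * πb 2) * (1 - p 1)
        - μb * πb 1 - γ * πb 1 = 0)
    -- steady state equation for n = 0
    (hss0 : lam * π0 = μa * πa 1 + μb * πb 1) :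
    let r := lam / (lam + δ)
    let g : PowerSeries ℝ :=
      PowerSeries.mk fun n => if n = 0 then π0 else πa n + πb n
    let u := lama * (μa - μb) / lam ^ 2
    let v := (lama * μa + lamb * μb) * π0 / lam ^ 2
    let w := (μa * μb + lama * μa + lamb * μb + γ * μa) * π0 / lam ^ 2
    let Δ := (lam - γ + μa - μb) ^ 2 + 4 * lam * γ
    let zp := (μa + μb + lam + γ + Real.sqrt Δ) / (2 * lam)
    let zm := (μa + μb + lam + γ - Real.sqrt Δ) / (2 * lam)
    PowerSeries.C u * PowerSeries.rescale r g
      = -((PowerSeries.X - PowerSeries.C zp)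
            * (PowerSeries.X - PowerSeries.C zm)) * g
        - PowerSeries.C v * PowerSeries.X + PowerSeries.C w :=
  two_speed_queue_generating_function_equation_general lama lamb lam μa μb γ δ hlamdef hlam hγ p hp
    π0 πa πb hssa hssb hssa1 hssb1 hss0
end

section
/- Let r, u, v, w, z^+, z^−, z be real numbers such that z r^k ≠ z^+ and z r^k ≠ z^− for every integer k ≥ 0. For x ∈ {z, r z} define g(x) := ∑_{n=0}^∞ (−u)^n (w − v r^n x) / ∏_{k=0}^n ((x r^k − z^+)(x r^k − z^−)), and assume both series (for x = z and x = r z) converge absolutely. Then u · g(r z) = −(z − z^+)(z − z^−) · g(z) − v z + w. -/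
/-!
Writing `q x = (x - z⁺)(x - z⁻)`, the `n`-th denominator at `x` is `q x` times the
`(n-1)`-st denominator at `r x`. Hence `u` times the `n`-th term at `r x` is `-q x` times the
`(n+1)`-st term at `x`, and summing over `n` shows that `u g(r x)` is `-q x` times `g(x)` minus
its zeroth term `(w - v x) / q x`.
-/

open Finset

section TelescopingSeries

variable {K : Type*} [Field K]

/-- The `n`-th term of the series solving `u g(r x) = -q(x) g(x) - v x + w`. -/
def telescopingTerm (q : K → K) (r u v w x : K) (n : ℕ) : K :=
  (-u) ^ n * (w - v * r ^ n * x) / ∏ k ∈ range (n + 1), q (x * r ^ k)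

theorem prod_range_succ_comp_mul_geom (q : K → K) (r x : K) (n : ℕ) :
    ∏ k ∈ range (n + 1), q (x * r ^ k) = q x * ∏ k ∈ range n, q (r * x * r ^ k) := by
  rw [prod_range_succ', pow_zero, mul_one, mul_comm]
  congr 1
  refine prod_congr rfl fun k _ => ?_
  rw [pow_succ']
  ring_nf

theorem telescopingTerm_zero (q : K → K) (r u v w x : K) :
    telescopingTerm q r u v w x 0 = (w - v * x) / q x := by
  simp [telescopingTerm]

theorem telescopingTerm_succ (q : K → K) (r u v w x : K) (n : ℕ) :
    telescopingTerm q r u v w x (n + 1) = -u * telescopingTerm q r u v w (r * x) n / q x := by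
  rw [telescopingTerm, telescopingTerm, prod_range_succ_comp_mul_geom, pow_succ]
  field_simp
  ring

variable [TopologicalSpace K] [IsTopologicalRing K] [T2Space K]

theorem tsum_telescopingTerm_functional_equation {q : K → K} {r u v w x : K} (hq : q x ≠ 0)
    (hs : Summable (telescopingTerm q r u v w x)) :
    u * ∑' n, telescopingTerm q r u v w (r * x) n
      = -q x * ∑' n, telescopingTerm q r u v w x n - v * x + w := by
  have hshift (n : ℕ) :
      u * telescopingTerm q r u v w (r * x) n = -q x * telescopingTerm q r u v w x (n + 1) := by
    rw [telescopingTerm_succ]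
    field_simp
  rw [← tsum_mul_left, tsum_congr hshift, tsum_mul_left, hs.tsum_eq_zero_add,
    telescopingTerm_zero]
  field_simp
  ring

end TelescopingSeries

theorem series_solves_functional_equation_general
    (r u v w zp zm z : ℝ)
    (hne : ∀ k : ℕ, z * r ^ k ≠ zp ∧ z * r ^ k ≠ zm)
    (f : ℝ → ℕ → ℝ)
    (hf : ∀ x n, f x n = (-u) ^ n * (w - v * r ^ n * x)
      / ∏ k ∈ Finset.range (n + 1), ((x * r ^ k - zp) * (x * r ^ k - zm)))
    (h1 : Summable fun n => |f z n|) :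
    u * (∑' n, f (r * z) n)
      = -((z - zp) * (z - zm)) * (∑' n, f z n) - v * z + w := by
  have hf' : f = telescopingTerm (fun y => (y - zp) * (y - zm)) r u v w :=
    funext fun x => funext (hf x)
  have hq : (z - zp) * (z - zm) ≠ 0 := by
    simpa [sub_eq_zero] using hne 0
  subst hf'
  exact tsum_telescopingTerm_functional_equation hq h1.of_abs

/-- The explicit series
`g(x) = ∑ₙ (−u)ⁿ (w − v rⁿ x) / ∏_{k=0}^{n} (x rᵏ − z⁺)(x rᵏ − z⁻)`
solves the functional equation `u g(rz) = −(z − z⁺)(z − z⁻) g(z) − vz + w`. -/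
theorem series_solves_functional_equation
    (r u v w zp zm z : ℝ)
    (hne : ∀ k : ℕ, z * r ^ k ≠ zp ∧ z * r ^ k ≠ zm)
    (f : ℝ → ℕ → ℝ)
    (hf : ∀ x n, f x n = (-u) ^ n * (w - v * r ^ n * x)
      / ∏ k ∈ Finset.range (n + 1), ((x * r ^ k - zp) * (x * r ^ k - zm)))
    (h1 : Summable fun n => |f z n|)
    (h2 : Summable fun n => |f (r * z) n|) :
    u * (∑' n, f (r * z) n)
      = -((z - zp) * (z - zm)) * (∑' n, f z n) - v * z + w :=
  series_solves_functional_equation_general r u v w zp zm z hne f hf h1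
end
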